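/- Let P be the presheaf on the space Y = ℕ ∪ {∞} (with open sets ∅ and [n,∞] for n ∈ ℕ) defined by P([n,∞]) = {0,1,...,n} and P(∅) = a one-element set, with restriction maps P([n,∞]) → P([m,∞]) for n ≤ m given by the inclusions {0,...,n} ⊆ {0,...,m}. Then P satisfies the sheaf condition: since the only covering sieve of any nonempty open [n,∞] is the principal (maximal) one, every matching family for any covering of [n,∞] is uniquely determined by its value at [n,∞]; equivalently, for every n ≤ m the restriction map together with the map to P(∅) exhibits P([n,∞]) as the equalizer data for the trivial cover, so P is a sheaf on Y. -/
import Mathlib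


/-- The collection of open sets of the space `Y = ω + 1`: the empty set together
with the sets `[n, ∞] = {k : n ≤ k} ∪ {∞}` for `n : ℕ`. -/
def omegaPlusOneOpens : Set (Set (WithTop ℕ)) :=
  insert ∅ {U | ∃ n : ℕ, U = Set.Ici (n : WithTop ℕ)}

/-- The presheaf `P` on `Y` with `P([n,∞]) = {0,…,n}` (realized as `Fin (n+1)`),
restriction maps `P([n,∞]) → P([m,∞])` for `n ≤ m` being the inclusions,
satisfies the sheaf condition: every covering of a nonempty open `[n,∞]` contains
`[n,∞]` itself, and every matching family for such a covering has a unique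
amalgamation in `P([n,∞])`. -/
theorem omegaPlusOne_presheaf_is_sheaf :
    ∀ (n : ℕ) (𝒮 : Set (Set (WithTop ℕ))), 𝒮 ⊆ omegaPlusOneOpens →
      ⋃₀ 𝒮 = Set.Ici (n : WithTop ℕ) →
      (Set.Ici (n : WithTop ℕ) ∈ 𝒮) ∧
      (∀ f : ∀ m : ℕ, Set.Ici (m : WithTop ℕ) ∈ 𝒮 → Fin (m + 1),
        (∀ (m m' : ℕ) (hm : Set.Ici (m : WithTop ℕ) ∈ 𝒮)
            (hm' : Set.Ici (m' : WithTop ℕ) ∈ 𝒮) (h : m ≤ m'),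
          Fin.castLE (Nat.succ_le_succ h) (f m hm) = f m' hm') →
        ∃! x : Fin (n + 1),
          ∀ (m : ℕ) (hm : Set.Ici (m : WithTop ℕ) ∈ 𝒮) (h : n ≤ m),
            Fin.castLE (Nat.succ_le_succ h) x = f m hm) := by
  intro n 𝒮 hsub hcover
  -- `n` lies in the union, so some member contains it; that member must be `Ici n`.
  have hn : (n : WithTop ℕ) ∈ ⋃₀ 𝒮 := by rw [hcover]; exact Set.mem_Ici.2 le_rfl
  obtain ⟨U, hU, hnU⟩ := hn
  have hmem : Set.Ici (n : WithTop ℕ) ∈ 𝒮 := by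
    rcases hsub hU with h | ⟨m, rfl⟩
    · subst h; exact absurd hnU (Set.notMem_empty _)
    · -- `m ≤ n` from `n ∈ Ici m`, and `n ≤ m` since `Ici m ⊆ Ici n`
      have h1 : (m : WithTop ℕ) ≤ n := hnU
      have h2 : (n : WithTop ℕ) ≤ m := by
        have : (m : WithTop ℕ) ∈ Set.Ici (n : WithTop ℕ) := by
          rw [← hcover]; exact ⟨_, hU, Set.mem_Ici.2 le_rfl⟩
        exact this
      have : (m : WithTop ℕ) = n := le_antisymm h1 h2
      have : m = n := by exact_mod_cast this
      subst this; exact hU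
  refine ⟨hmem, fun f hf => ⟨f n hmem, fun m hm h => hf n m hmem hm h, fun y hy => ?_⟩⟩
  have := hy n hmem (le_refl n)
  simpa using this
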